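/- Av(132)𝒜 = Av(1432). -/
import Mathlib


/-- A permutation of length `n` (a bijection of `{0, …, n-1}`, identified with the
sequence of its values), packaged with its length. -/
abbrev PermSig : Type := Σ n : ℕ, Equiv.Perm (Fin n)

/-- Pattern containment: the permutation `α` of length `k` is contained in the
permutation `τ` of length `n` if there is an increasing choice of positions on which
`τ` is order-isomorphic to `α`. -/
def Contains {k n : ℕ} (α : Equiv.Perm (Fin k)) (τ : Equiv.Perm (Fin n)) : Prop :=
  ∃ f : Fin k ↪o Fin n, ∀ i j : Fin k, α i < α j ↔ τ (f i) < τ (f j)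

/-- The avoidance class `Av B`: all permutations containing no member of `B`. -/
def Av (B : Set PermSig) : Set PermSig :=
  {τ : PermSig | ∀ β ∈ B, ¬ Contains β.2 τ.2}

/-- A pattern class: a set of permutations downward closed under pattern containment. -/
def IsPatternClass (C : Set PermSig) : Prop :=
  ∀ (k n : ℕ) (α : Equiv.Perm (Fin k)) (τ : Equiv.Perm (Fin n)),
    Contains α τ → (⟨n, τ⟩ : PermSig) ∈ C → (⟨k, α⟩ : PermSig) ∈ C

/-- The base relation of the poset `P(τ)` on values: `x ≺ y` whenever `x` appears
before `y` in `τ` and either `x > y`, or some value `z` appears between `x` and `y`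
in `τ` with `x < y < z`. -/
def PQBase {n : ℕ} (τ : Equiv.Perm (Fin n)) (x y : Fin n) : Prop :=
  τ.symm x < τ.symm y ∧
    (y < x ∨ ∃ z : Fin n, τ.symm x < τ.symm z ∧ τ.symm z < τ.symm y ∧ x < y ∧ y < z)

/-- The poset `P(τ)`: the transitive closure of the base relation. -/
def PQ {n : ℕ} (τ : Equiv.Perm (Fin n)) : Fin n → Fin n → Prop :=
  Relation.TransGen (PQBase τ)

/-- `σ` is a linear extension of `P(τ)`; equivalently, `(σ, τ)` is an allowable pair,
i.e. a priority queue can produce output `τ` from input `σ`. -/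
def Allowable {n : ℕ} (σ τ : Equiv.Perm (Fin n)) : Prop :=
  ∀ x y : Fin n, PQ τ x y → σ.symm x < σ.symm y

/-- `C𝒜`: the set of permutations obtainable by a priority queue from an input in `C`. -/
def ImageA (C : Set PermSig) : Set PermSig :=
  {τ : PermSig | ∃ σ : Equiv.Perm (Fin τ.1), (⟨τ.1, σ⟩ : PermSig) ∈ C ∧ Allowable σ τ.2}

/-- The pattern `132` (written 0-indexed). -/
noncomputable def p132 : Equiv.Perm (Fin 3) :=
  Equiv.ofBijective (![0, 2, 1] : Fin 3 → Fin 3) (by decide)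

/-- The pattern `1432` (written 0-indexed). -/
noncomputable def p1432 : Equiv.Perm (Fin 4) :=
  Equiv.ofBijective (![0, 3, 2, 1] : Fin 4 → Fin 4) (by decide)

section
variable {n : ℕ} (τ : Equiv.Perm (Fin n))

lemma pqbase_trans {x y z : Fin n} (h1 : PQBase τ x y) (h2 : PQBase τ y z) :
    PQBase τ x z := by
  obtain ⟨hp1, hc1⟩ := h1
  obtain ⟨hp2, hc2⟩ := h2
  refine ⟨hp1.trans hp2, ?_⟩
  rcases lt_or_ge z x with hzx | hxz
  · exact Or.inl hzx
  have hne : x ≠ z := by rintro rfl; exact lt_irrefl _ (hp1.trans hp2)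
  have hxz' : x < z := lt_of_le_of_ne hxz hne
  rcases lt_or_ge z y with hzy | hyz
  · exact Or.inr ⟨y, hp1, hp2, hxz', hzy⟩
  · rcases hc2 with h | ⟨u, hu1, hu2, _, hu4⟩
    · exact absurd h (not_lt.mpr hyz)
    · exact Or.inr ⟨u, hp1.trans hu1, hu2, hxz', hu4⟩

lemma pq_iff {x y : Fin n} : PQ τ x y ↔ PQBase τ x y := by
  constructor
  · intro h
    induction h with
    | single h => exact h
    | tail _ h2 ih => exact pqbase_trans τ ih h2
  · exact Relation.TransGen.single

/-- value-centric 1432 occurrence -/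
def NoPat1432 : Prop := ∀ v1 v2 v3 v4 : Fin n,
  τ.symm v1 < τ.symm v2 → τ.symm v2 < τ.symm v3 → τ.symm v3 < τ.symm v4 →
  v1 < v4 → v4 < v3 → v3 < v2 → False

lemma noPat_of_not_contains (h : ¬ Contains p1432 τ) : NoPat1432 τ := by
  intro v1 v2 v3 v4 hp1 hp2 hp3 hv1 hv2 hv3
  apply h
  have hsm : StrictMono (![τ.symm v1, τ.symm v2, τ.symm v3, τ.symm v4]) := by
    intro i j hij
    fin_cases i <;> fin_cases j <;>
      simp_all <;> first
        | exact hp1.trans hp2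
        | exact hp2.trans hp3
        | exact (hp1.trans hp2).trans hp3
        | omega
  refine ⟨OrderEmbedding.ofStrictMono _ hsm, ?_⟩
  intro i j
  have e1 : ∀ m : Fin 4, τ ((OrderEmbedding.ofStrictMono _ hsm) m)
      = ![v1, v2, v3, v4] m := by
    intro m
    fin_cases m <;> simp [OrderEmbedding.ofStrictMono]
  rw [e1, e1]
  have hv14 : v1 < v4 := hv1
  have hv43 : v4 < v3 := hv2
  have hv32 : v3 < v2 := hv3
  have h12 : v1 < v2 := (hv1.trans hv2).trans hv3
  have h13 : v1 < v3 := hv1.trans hv2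
  have h42 : v4 < v2 := hv2.trans hv3
  fin_cases i <;> fin_cases j <;>
    simp [p1432, Equiv.ofBijective] <;>
    first
      | exact h12 | exact h13 | exact hv14 | exact hv43 | exact hv32 | exact h42
      | exact h12.le | exact h13.le | exact hv14.le | exact hv43.le
      | exact hv32.le | exact h42.le | exact le_refl _
      | exact asymm h12 | exact asymm h13 | exact asymm hv14
      | exact asymm hv43 | exact asymm hv32 | exact asymm h42

end

section Main
variable {n : ℕ} (τ : Equiv.Perm (Fin n))

lemma main_exists (hτ : NoPat1432 τ) :
    ∀ (k : ℕ) (V : Finset (Fin n)) (b : ℕ) (Y : Finset (Fin n)),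
      V.card ≤ k →
      (∀ g ∈ Y, g ∉ V) →
      (∀ x ∈ V, ∀ z ∈ V, ∀ g ∈ Y, x < g → g < z → PQBase τ x z → False) →
      (∀ z ∈ V, ∀ y ∈ V, PQBase τ z y → y < z → b < (y : ℕ) → False) →
      (∀ x ∈ V, ∀ z ∈ V, ∀ g ∈ Y, b < (x : ℕ) → x < g → g < z → False) →
      (∀ x ∈ V, ∀ u ∈ V, ∀ y ∈ V, τ.symm x < τ.symm u → τ.symm u < τ.symm y →
        b < (x : ℕ) → x < y → y < u → False) →
      ∃ ρ : Fin n → ℕ,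
        (∀ x ∈ V, ρ x < V.card) ∧
        (∀ x ∈ V, ∀ y ∈ V, x ≠ y → ρ x ≠ ρ y) ∧
        (∀ x ∈ V, ∀ y ∈ V, PQBase τ x y → ρ x < ρ y) ∧
        (∀ x ∈ V, ∀ z ∈ V, ∀ y ∈ V, ρ x < ρ z → ρ z < ρ y → x < y → y < z → False) ∧
        (∀ x ∈ V, ∀ z ∈ V, ∀ g ∈ Y, ρ x < ρ z → x < g → g < z → False) ∧
        (∀ z ∈ V, ∀ y ∈ V, ρ z < ρ y → y < z → (y : ℕ) ≤ b) := by
  intro k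
  induction k with
  | zero =>
    intro V b Y hcard _ _ _ _ _
    have hV : V = ∅ := Finset.card_eq_zero.mp (Nat.le_zero.mp hcard)
    subst hV
    exact ⟨fun _ => 0, by simp, by simp, by simp, by simp, by simp, by simp⟩
  | succ k ih =>
    intro V b Y hcard hdisj HBV HCV HDV HFV
    classical
    rcases V.eq_empty_or_nonempty with rfl | hV
    · exact ⟨fun _ => 0, by simp, by simp, by simp, by simp, by simp, by simp⟩
    set w := V.max' hV with hw
    have hwV : w ∈ V := V.max'_mem hV
    have hle : ∀ v ∈ V, v ≤ w := fun v hv => V.le_max' v hv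
    set L := V.filter (fun v => τ.symm v < τ.symm w) with hLdef
    set R := V.filter (fun v => τ.symm w < τ.symm v) with hRdef
    set SB := L.filter (fun x => (∃ y ∈ R, x < y) ∨ ∃ g ∈ Y, x < g ∧ g < w) with hSBdef
    set LA := L.filter (fun x => ∀ s ∈ SB, s < x) with hLAdef
    set LB := L.filter (fun x => ¬ ∀ s ∈ SB, s < x) with hLBdef
    -- membership basics
    have hLmem : ∀ v, v ∈ L ↔ v ∈ V ∧ τ.symm v < τ.symm w := by
      intro v; rw [hLdef, Finset.mem_filter]
    have hRmem : ∀ v, v ∈ R ↔ v ∈ V ∧ τ.symm w < τ.symm v := by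
      intro v; rw [hRdef, Finset.mem_filter]
    have hSBmem : ∀ v, v ∈ SB ↔ v ∈ L ∧ ((∃ y ∈ R, v < y) ∨ ∃ g ∈ Y, v < g ∧ g < w) := by
      intro v; rw [hSBdef, Finset.mem_filter]
    have hLAmem : ∀ v, v ∈ LA ↔ v ∈ L ∧ ∀ s ∈ SB, s < v := by
      intro v; rw [hLAdef, Finset.mem_filter]
    have hLBmem : ∀ v, v ∈ LB ↔ v ∈ L ∧ ¬ ∀ s ∈ SB, s < v := by
      intro v; rw [hLBdef, Finset.mem_filter]
    -- part inclusions in V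
    have hLV : ∀ v ∈ L, v ∈ V := fun v hv => ((hLmem v).mp hv).1
    have hRV : ∀ v ∈ R, v ∈ V := fun v hv => ((hRmem v).mp hv).1
    have hLAV : ∀ v ∈ LA, v ∈ V := fun v hv => hLV v ((hLAmem v).mp hv).1
    have hLBV : ∀ v ∈ LB, v ∈ V := fun v hv => hLV v ((hLBmem v).mp hv).1
    -- strict value bounds
    have hLlt : ∀ v ∈ L, v < w := by
      intro v hv
      rcases (hLmem v).mp hv with ⟨hvV, hpos⟩
      rcases (hle v hvV).lt_or_eq with h | h
      · exact h
      · exact absurd hpos (by rw [h]; exact lt_irrefl _)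
    have hRlt : ∀ v ∈ R, v < w := by
      intro v hv
      rcases (hRmem v).mp hv with ⟨hvV, hpos⟩
      rcases (hle v hvV).lt_or_eq with h | h
      · exact h
      · exact absurd hpos (by rw [h]; exact lt_irrefl _)
    -- trichotomy of parts
    have hsplit : ∀ v ∈ V, v ∈ LA ∨ v = w ∨ v ∈ LB ∨ v ∈ R := by
      intro v hv
      by_cases hvw : v = w
      · exact Or.inr (Or.inl hvw)
      · have hne : τ.symm v ≠ τ.symm w := fun hh => hvw (τ.symm.injective hh)
        rcases lt_or_gt_of_ne hne with h | h
        · have hvL : v ∈ L := (hLmem v).mpr ⟨hv, h⟩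
          by_cases hall : ∀ s ∈ SB, s < v
          · exact Or.inl ((hLAmem v).mpr ⟨hvL, hall⟩)
          · exact Or.inr (Or.inr (Or.inl ((hLBmem v).mpr ⟨hvL, hall⟩)))
        · exact Or.inr (Or.inr (Or.inr ((hRmem v).mpr ⟨hv, h⟩)))
    -- disjointness facts
    have hwnL : w ∉ L := by
      intro h; exact lt_irrefl _ ((hLmem w).mp h).2
    have hwnR : w ∉ R := by
      intro h; exact lt_irrefl _ ((hRmem w).mp h).2
    have hLR : ∀ v ∈ L, v ∉ R := by
      intro v hv hvR
      exact lt_asymm ((hLmem v).mp hv).2 ((hRmem v).mp hvR).2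
    have hAB : ∀ v ∈ LA, v ∉ LB := by
      intro v hv hvB
      exact ((hLBmem v).mp hvB).2 ((hLAmem v).mp hv).2
    -- SB values are ≤ b
    have hSBb : ∀ s ∈ SB, (s : ℕ) ≤ b := by
      intro s hs
      by_contra hb
      push_neg at hb
      rcases (hSBmem s).mp hs with ⟨hsL, hcase⟩
      rcases (hLmem s).mp hsL with ⟨hsV, hspos⟩
      rcases hcase with ⟨y, hyR, hsy⟩ | ⟨g, hgY, hsg, hgw⟩
      · exact HFV s hsV w hwV y (hRV y hyR) hspos ((hRmem y).mp hyR).2 hb hsy (hRlt y hyR)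
      · exact HDV s hsV w hwV g hgY hb hsg hgw
    -- x ∈ SB → x ∈ LB
    have hSBLB : ∀ x ∈ SB, x ∈ LB := by
      intro x hx
      refine (hLBmem x).mpr ⟨((hSBmem x).mp hx).1, ?_⟩
      intro hall
      exact lt_irrefl _ (hall x hx)
    -- x ∈ LB → ∃ s ∈ SB, x ≤ s
    have hLBex : ∀ x ∈ LB, ∃ s ∈ SB, x ≤ s := by
      intro x hx
      rcases (hLBmem x).mp hx with ⟨_, hnall⟩
      push_neg at hnall
      obtain ⟨s, hs, hns⟩ := hnall
      exact ⟨s, hs, hns⟩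
    -- PQBase x w → x ∈ LA  (for x ∈ L)
    have hprecw : ∀ x ∈ L, PQBase τ x w → x ∈ LA := by
      intro x hxL hbase
      refine (hLAmem x).mpr ⟨hxL, ?_⟩
      intro s hs
      by_contra hns
      have hxs : x ≤ s := le_of_not_gt hns
      obtain ⟨hpxw, hcase⟩ := hbase
      rcases hcase with h | ⟨u, hu1, hu2, hu3, hu4⟩
      · exact absurd h (not_lt.mpr (le_of_lt (hLlt x hxL)))
      rcases (hSBmem s).mp hs with ⟨hsL, hscase⟩
      rcases hscase with ⟨y, hyR, hsy⟩ | ⟨g, hgY, hsg, hgw⟩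
      · -- 1432 pattern (x, u, w, y)
        exact hτ x u w y hu1 hu2 ((hRmem y).mp hyR).2
          (lt_of_le_of_lt hxs hsy) (hRlt y hyR) hu4
      · -- HB with (x, g, w)
        exact HBV x (hLV x hxL) w hwV g hgY (lt_of_le_of_lt hxs hsg) hgw
          ⟨hpxw, Or.inr ⟨u, hu1, hu2, hu3, hu4⟩⟩
    -- no constraint from LB to LA
    have hnoBA : ∀ g' ∈ LB, ∀ v ∈ LA, PQBase τ g' v → False := by
      intro g' hg' v hv hbase
      obtain ⟨s, hsSB, hgs⟩ := hLBex g' hg'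
      have hsv : s < v := ((hLAmem v).mp hv).2 s hsSB
      obtain ⟨hpgv, hcase⟩ := hbase
      rcases hcase with h | ⟨u, hu1, hu2, hu3, hu4⟩
      · exact absurd (lt_of_lt_of_le (lt_of_lt_of_le h (le_of_lt
          (lt_of_le_of_lt hgs hsv))) (le_refl _)) (lt_irrefl v)
      rcases (hSBmem s).mp hsSB with ⟨hsL, hscase⟩
      rcases hscase with ⟨y, hyR, hsy⟩ | ⟨g, hgY, hsg, hgw⟩
      · -- blocked witness y ∈ R
        rcases lt_trichotomy y v with hyv | heq | hvy
        · -- 1432 pattern (g', u, v, y)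
          exact hτ g' u v y hu1 hu2
            (lt_trans ((hLmem v).mp ((hLAmem v).mp hv).1).2 ((hRmem y).mp hyR).2)
            (lt_of_le_of_lt hgs hsy) hyv hu4
        · exact hLR v ((hLAmem v).mp hv).1 (by rw [← heq]; exact hyR)
        · -- v is blocked hence in SB, contradiction with v ∈ LA
          have hvSB : v ∈ SB := (hSBmem v).mpr ⟨((hLAmem v).mp hv).1, Or.inl ⟨y, hyR, hvy⟩⟩
          exact lt_irrefl _ (((hLAmem v).mp hv).2 v hvSB)
      · -- ghost witness g ∈ Y
        rcases lt_trichotomy g v with hgv | heq | hvg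
        · exact HBV g' (hLBV g' hg') v (hLAV v hv) g hgY (lt_of_le_of_lt hgs hsg) hgv
            ⟨hpgv, Or.inr ⟨u, hu1, hu2, hu3, hu4⟩⟩
        · exact hdisj g hgY (by rw [heq]; exact hLAV v hv)
        · have hvSB : v ∈ SB := (hSBmem v).mpr
            ⟨((hLAmem v).mp hv).1, Or.inr ⟨g, hgY, hvg, hgw⟩⟩
          exact lt_irrefl _ (((hLAmem v).mp hv).2 v hvSB)
    -- card identity
    have hcardLR : LA.card + LB.card = L.card := by
      rw [hLAdef, hLBdef]
      exact Finset.card_filter_add_card_filter_not (p := fun x => ∀ s ∈ SB, s < x)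
    have hVsplit : V.filter (fun v => ¬ τ.symm v < τ.symm w) = insert w R := by
      ext v
      rw [Finset.mem_filter, Finset.mem_insert, hRmem]
      constructor
      · rintro ⟨hvV, hnpos⟩
        by_cases hvw : v = w
        · exact Or.inl hvw
        · have hne : τ.symm v ≠ τ.symm w := fun hh => hvw (τ.symm.injective hh)
          rcases lt_or_gt_of_ne hne with h | h
          · exact absurd h hnpos
          · exact Or.inr ⟨hvV, h⟩
      · rintro (rfl | ⟨hvV, hpos⟩)
        · exact ⟨hwV, lt_irrefl _⟩
        · exact ⟨hvV, not_lt.mpr (le_of_lt hpos)⟩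
    have hcardV : LA.card + 1 + LB.card + R.card = V.card := by
      have h1 : L.card + (insert w R).card = V.card := by
        rw [← hVsplit, hLdef]
        exact Finset.card_filter_add_card_filter_not
          (p := fun v => τ.symm v < τ.symm w)
      rw [Finset.card_insert_of_notMem hwnR] at h1
      omega
    -- bR
    set bR : ℕ := min (min b (w : ℕ))
      (if hL' : L.Nonempty then ((L.min' hL' : Fin n) : ℕ) else b) with hbRdef
    have hbRb : bR ≤ b := le_trans (min_le_left _ _) (min_le_left _ _)
    have hbRL : ∀ x ∈ L, bR ≤ (x : ℕ) := by
      intro x hx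
      have hne : L.Nonempty := ⟨x, hx⟩
      calc bR ≤ (if hL' : L.Nonempty then ((L.min' hL' : Fin n) : ℕ) else b) :=
            min_le_right _ _
        _ ≤ (x : ℕ) := by
            rw [dif_pos hne]
            exact_mod_cast Fin.le_def.mp (L.min'_le x hx)
    have hbRsplit : ∀ c : ℕ, bR < c →
        b < c ∨ (w : ℕ) < c ∨ ∃ hL' : L.Nonempty, ((L.min' hL' : Fin n) : ℕ) < c := by
      intro c hc
      rw [hbRdef] at hc
      rcases min_lt_iff.mp hc with h | h
      · rcases min_lt_iff.mp h with h' | h'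
        · exact Or.inl h'
        · exact Or.inr (Or.inl h')
      · by_cases hL' : L.Nonempty
        · rw [dif_pos hL'] at h
          exact Or.inr (Or.inr ⟨hL', h⟩)
        · rw [dif_neg hL'] at h
          exact Or.inl h
    -- card bounds for the recursive calls
    have hcardk : LA.card ≤ k ∧ LB.card ≤ k ∧ R.card ≤ k := by
      refine ⟨?_, ?_, ?_⟩ <;> omega
    -- value-trans helper: coercion lt
    have finlt : ∀ a c : Fin n, (a : ℕ) < (c : ℕ) → a < c := fun a c h => h
    -- LA recursive call
    have hAdisj : ∀ g ∈ Y ∪ LB ∪ R, g ∉ LA := by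
      intro g hg hgA
      rcases Finset.mem_union.mp hg with hg' | hgR
      · rcases Finset.mem_union.mp hg' with hgY | hgB
        · exact hdisj g hgY (hLAV g hgA)
        · exact hAB g hgA hgB
      · exact hLR g ((hLAmem g).mp hgA).1 hgR
    have hAHB : ∀ x ∈ LA, ∀ z ∈ LA, ∀ g ∈ Y ∪ LB ∪ R,
        x < g → g < z → PQBase τ x z → False := by
      intro x hx z hz g hg hxg hgz hbase
      rcases Finset.mem_union.mp hg with hg' | hgR
      · rcases Finset.mem_union.mp hg' with hgY | hgB
        · exact HBV x (hLAV x hx) z (hLAV z hz) g hgY hxg hgz hbase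
        · obtain ⟨s, hsSB, hgs⟩ := hLBex g hgB
          exact lt_asymm hxg (lt_of_le_of_lt hgs (((hLAmem x).mp hx).2 s hsSB))
      · obtain ⟨hpxz, hcase⟩ := hbase
        rcases hcase with h | ⟨u, hu1, hu2, hu3, hu4⟩
        · exact lt_asymm h (lt_trans hxg hgz)
        · exact hτ x u z g hu1 hu2
            (lt_trans ((hLmem z).mp ((hLAmem z).mp hz).1).2 ((hRmem g).mp hgR).2)
            hxg hgz hu4
    have hAHC : ∀ z ∈ LA, ∀ y ∈ LA, PQBase τ z y → y < z → b < (y : ℕ) → False :=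
      fun z hz y hy hb hyz hby => HCV z (hLAV z hz) y (hLAV y hy) hb hyz hby
    have hAHD : ∀ x ∈ LA, ∀ z ∈ LA, ∀ g ∈ Y ∪ LB ∪ R,
        b < (x : ℕ) → x < g → g < z → False := by
      intro x hx z hz g hg hbx hxg hgz
      rcases Finset.mem_union.mp hg with hg' | hgR
      · rcases Finset.mem_union.mp hg' with hgY | hgB
        · exact HDV x (hLAV x hx) z (hLAV z hz) g hgY hbx hxg hgz
        · obtain ⟨s, hsSB, hgs⟩ := hLBex g hgB
          exact lt_asymm hxg (lt_of_le_of_lt hgs (((hLAmem x).mp hx).2 s hsSB))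
      · exact HFV x (hLAV x hx) w hwV g (hRV g hgR)
          ((hLmem x).mp ((hLAmem x).mp hx).1).2 ((hRmem g).mp hgR).2 hbx hxg (hRlt g hgR)
    have hAHF : ∀ x ∈ LA, ∀ u ∈ LA, ∀ y ∈ LA, τ.symm x < τ.symm u → τ.symm u < τ.symm y →
        b < (x : ℕ) → x < y → y < u → False :=
      fun x hx u hu y hy h1 h2 h3 h4 h5 =>
        HFV x (hLAV x hx) u (hLAV u hu) y (hLAV y hy) h1 h2 h3 h4 h5
    obtain ⟨ρA, hAbound, hAinj, hAext, hAavoid, hAghost, hAinv⟩ :=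
      ih LA b (Y ∪ LB ∪ R) (by omega) hAdisj hAHB hAHC hAHD hAHF
    -- LB recursive call
    have hBdisj : ∀ g ∈ Y ∪ R, g ∉ LB := by
      intro g hg hgB
      rcases Finset.mem_union.mp hg with hgY | hgR
      · exact hdisj g hgY (hLBV g hgB)
      · exact hLR g ((hLBmem g).mp hgB).1 hgR
    have hBHB : ∀ x ∈ LB, ∀ z ∈ LB, ∀ g ∈ Y ∪ R,
        x < g → g < z → PQBase τ x z → False := by
      intro x hx z hz g hg hxg hgz hbase
      rcases Finset.mem_union.mp hg with hgY | hgR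
      · exact HBV x (hLBV x hx) z (hLBV z hz) g hgY hxg hgz hbase
      · obtain ⟨hpxz, hcase⟩ := hbase
        rcases hcase with h | ⟨u, hu1, hu2, hu3, hu4⟩
        · exact lt_asymm h (lt_trans hxg hgz)
        · exact hτ x u z g hu1 hu2
            (lt_trans ((hLmem z).mp ((hLBmem z).mp hz).1).2 ((hRmem g).mp hgR).2)
            hxg hgz hu4
    have hBHC : ∀ z ∈ LB, ∀ y ∈ LB, PQBase τ z y → y < z → min b (w : ℕ) < (y : ℕ) → False := by
      intro z hz y hy hbase hyz hby
      rcases min_lt_iff.mp hby with h | h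
      · exact HCV z (hLBV z hz) y (hLBV y hy) hbase hyz h
      · have := Fin.le_def.mp (hle y (hLBV y hy)); omega
    have hBHD : ∀ x ∈ LB, ∀ z ∈ LB, ∀ g ∈ Y ∪ R,
        min b (w : ℕ) < (x : ℕ) → x < g → g < z → False := by
      intro x hx z hz g hg hbx hxg hgz
      rcases min_lt_iff.mp hbx with h | h
      · rcases Finset.mem_union.mp hg with hgY | hgR
        · exact HDV x (hLBV x hx) z (hLBV z hz) g hgY h hxg hgz
        · exact HFV x (hLBV x hx) w hwV g (hRV g hgR)
            ((hLmem x).mp ((hLBmem x).mp hx).1).2 ((hRmem g).mp hgR).2 h hxg (hRlt g hgR)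
      · have := Fin.le_def.mp (hle x (hLBV x hx)); omega
    have hBHF : ∀ x ∈ LB, ∀ u ∈ LB, ∀ y ∈ LB, τ.symm x < τ.symm u → τ.symm u < τ.symm y →
        min b (w : ℕ) < (x : ℕ) → x < y → y < u → False := by
      intro x hx u hu y hy h1 h2 h3 h4 h5
      rcases min_lt_iff.mp h3 with h | h
      · exact HFV x (hLBV x hx) u (hLBV u hu) y (hLBV y hy) h1 h2 h h4 h5
      · have := Fin.le_def.mp (hle x (hLBV x hx)); omega
    obtain ⟨ρB, hBbound, hBinj, hBext, hBavoid, hBghost, hBinv⟩ :=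
      ih LB (min b (w : ℕ)) (Y ∪ R) (by omega) hBdisj hBHB hBHC hBHD hBHF
    -- R recursive call
    have hRdisj : ∀ g ∈ Y, g ∉ R := fun g hg hgR => hdisj g hg (hRV g hgR)
    have hRHB : ∀ x ∈ R, ∀ z ∈ R, ∀ g ∈ Y, x < g → g < z → PQBase τ x z → False :=
      fun x hx z hz g hg h1 h2 h3 => HBV x (hRV x hx) z (hRV z hz) g hg h1 h2 h3
    have hRHC : ∀ z ∈ R, ∀ y ∈ R, PQBase τ z y → y < z → bR < (y : ℕ) → False := by
      intro z hz y hy hbase hyz hby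
      rcases hbRsplit _ hby with h | h | ⟨hL', h⟩
      · exact HCV z (hRV z hz) y (hRV y hy) hbase hyz h
      · have := Fin.le_def.mp (hle y (hRV y hy)); omega
      · set ℓ := L.min' hL' with hldef
        have hℓL : ℓ ∈ L := L.min'_mem hL'
        exact hτ ℓ w z y ((hLmem ℓ).mp hℓL).2 ((hRmem z).mp hz).2 hbase.1
          (finlt _ _ h) hyz (hRlt z hz)
    have hRHD : ∀ x ∈ R, ∀ z ∈ R, ∀ g ∈ Y, bR < (x : ℕ) → x < g → g < z → False := by
      intro x hx z hz g hg hbx hxg hgz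
      rcases hbRsplit _ hbx with h | h | ⟨hL', h⟩
      · exact HDV x (hRV x hx) z (hRV z hz) g hg h hxg hgz
      · have := Fin.le_def.mp (hle x (hRV x hx)); omega
      · set ℓ := L.min' hL' with hldef
        have hℓL : ℓ ∈ L := L.min'_mem hL'
        have hℓx : ℓ < x := finlt _ _ h
        have hℓz : ℓ < z := lt_trans hℓx (lt_trans hxg hgz)
        exact HBV ℓ (hLV ℓ hℓL) z (hRV z hz) g hg (lt_trans hℓx hxg) hgz
          ⟨lt_trans ((hLmem ℓ).mp hℓL).2 ((hRmem z).mp hz).2,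
            Or.inr ⟨w, ((hLmem ℓ).mp hℓL).2, ((hRmem z).mp hz).2, hℓz, hRlt z hz⟩⟩
    have hRHF : ∀ x ∈ R, ∀ u ∈ R, ∀ y ∈ R, τ.symm x < τ.symm u → τ.symm u < τ.symm y →
        bR < (x : ℕ) → x < y → y < u → False := by
      intro x hx u hu y hy h1 h2 h3 h4 h5
      rcases hbRsplit _ h3 with h | h | ⟨hL', h⟩
      · exact HFV x (hRV x hx) u (hRV u hu) y (hRV y hy) h1 h2 h h4 h5
      · have := Fin.le_def.mp (hle x (hRV x hx)); omega
      · set ℓ := L.min' hL' with hldef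
        have hℓL : ℓ ∈ L := L.min'_mem hL'
        exact hτ ℓ w u y ((hLmem ℓ).mp hℓL).2 ((hRmem u).mp hu).2 h2
          (lt_trans (finlt _ _ h) h4) h5 (hRlt u hu)
    obtain ⟨ρR, hRbound, hRinj, hRext, hRavoid, hRghost, hRinv⟩ :=
      ih R bR Y (by omega) hRdisj hRHB hRHC hRHD hRHF
    -- value-trans helper: coercion lt
    have finlt : ∀ a c : Fin n, (a : ℕ) < (c : ℕ) → a < c := fun a c h => h
    -- LA recursive call
    have hAdisj : ∀ g ∈ Y ∪ LB ∪ R, g ∉ LA := by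
      intro g hg hgA
      rcases Finset.mem_union.mp hg with hg' | hgR
      · rcases Finset.mem_union.mp hg' with hgY | hgB
        · exact hdisj g hgY (hLAV g hgA)
        · exact hAB g hgA hgB
      · exact hLR g ((hLAmem g).mp hgA).1 hgR
    have hAHB : ∀ x ∈ LA, ∀ z ∈ LA, ∀ g ∈ Y ∪ LB ∪ R,
        x < g → g < z → PQBase τ x z → False := by
      intro x hx z hz g hg hxg hgz hbase
      rcases Finset.mem_union.mp hg with hg' | hgR
      · rcases Finset.mem_union.mp hg' with hgY | hgB
        · exact HBV x (hLAV x hx) z (hLAV z hz) g hgY hxg hgz hbase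
        · obtain ⟨s, hsSB, hgs⟩ := hLBex g hgB
          exact lt_asymm hxg (lt_of_le_of_lt hgs (((hLAmem x).mp hx).2 s hsSB))
      · obtain ⟨hpxz, hcase⟩ := hbase
        rcases hcase with h | ⟨u, hu1, hu2, hu3, hu4⟩
        · exact lt_asymm h (lt_trans hxg hgz)
        · exact hτ x u z g hu1 hu2
            (lt_trans ((hLmem z).mp ((hLAmem z).mp hz).1).2 ((hRmem g).mp hgR).2)
            hxg hgz hu4
    have hAHC : ∀ z ∈ LA, ∀ y ∈ LA, PQBase τ z y → y < z → b < (y : ℕ) → False :=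
      fun z hz y hy hb hyz hby => HCV z (hLAV z hz) y (hLAV y hy) hb hyz hby
    have hAHD : ∀ x ∈ LA, ∀ z ∈ LA, ∀ g ∈ Y ∪ LB ∪ R,
        b < (x : ℕ) → x < g → g < z → False := by
      intro x hx z hz g hg hbx hxg hgz
      rcases Finset.mem_union.mp hg with hg' | hgR
      · rcases Finset.mem_union.mp hg' with hgY | hgB
        · exact HDV x (hLAV x hx) z (hLAV z hz) g hgY hbx hxg hgz
        · obtain ⟨s, hsSB, hgs⟩ := hLBex g hgB
          exact lt_asymm hxg (lt_of_le_of_lt hgs (((hLAmem x).mp hx).2 s hsSB))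
      · exact HFV x (hLAV x hx) w hwV g (hRV g hgR)
          ((hLmem x).mp ((hLAmem x).mp hx).1).2 ((hRmem g).mp hgR).2 hbx hxg (hRlt g hgR)
    have hAHF : ∀ x ∈ LA, ∀ u ∈ LA, ∀ y ∈ LA, τ.symm x < τ.symm u → τ.symm u < τ.symm y →
        b < (x : ℕ) → x < y → y < u → False :=
      fun x hx u hu y hy h1 h2 h3 h4 h5 =>
        HFV x (hLAV x hx) u (hLAV u hu) y (hLAV y hy) h1 h2 h3 h4 h5
    obtain ⟨ρA, hAbound, hAinj, hAext, hAavoid, hAghost, hAinv⟩ :=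
      ih LA b (Y ∪ LB ∪ R) (by omega) hAdisj hAHB hAHC hAHD hAHF
    -- LB recursive call
    have hBdisj : ∀ g ∈ Y ∪ R, g ∉ LB := by
      intro g hg hgB
      rcases Finset.mem_union.mp hg with hgY | hgR
      · exact hdisj g hgY (hLBV g hgB)
      · exact hLR g ((hLBmem g).mp hgB).1 hgR
    have hBHB : ∀ x ∈ LB, ∀ z ∈ LB, ∀ g ∈ Y ∪ R,
        x < g → g < z → PQBase τ x z → False := by
      intro x hx z hz g hg hxg hgz hbase
      rcases Finset.mem_union.mp hg with hgY | hgR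
      · exact HBV x (hLBV x hx) z (hLBV z hz) g hgY hxg hgz hbase
      · obtain ⟨hpxz, hcase⟩ := hbase
        rcases hcase with h | ⟨u, hu1, hu2, hu3, hu4⟩
        · exact lt_asymm h (lt_trans hxg hgz)
        · exact hτ x u z g hu1 hu2
            (lt_trans ((hLmem z).mp ((hLBmem z).mp hz).1).2 ((hRmem g).mp hgR).2)
            hxg hgz hu4
    have hBHC : ∀ z ∈ LB, ∀ y ∈ LB, PQBase τ z y → y < z → min b (w : ℕ) < (y : ℕ) → False := by
      intro z hz y hy hbase hyz hby
      rcases min_lt_iff.mp hby with h | h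
      · exact HCV z (hLBV z hz) y (hLBV y hy) hbase hyz h
      · have := Fin.le_def.mp (hle y (hLBV y hy)); omega
    have hBHD : ∀ x ∈ LB, ∀ z ∈ LB, ∀ g ∈ Y ∪ R,
        min b (w : ℕ) < (x : ℕ) → x < g → g < z → False := by
      intro x hx z hz g hg hbx hxg hgz
      rcases min_lt_iff.mp hbx with h | h
      · rcases Finset.mem_union.mp hg with hgY | hgR
        · exact HDV x (hLBV x hx) z (hLBV z hz) g hgY h hxg hgz
        · exact HFV x (hLBV x hx) w hwV g (hRV g hgR)
            ((hLmem x).mp ((hLBmem x).mp hx).1).2 ((hRmem g).mp hgR).2 h hxg (hRlt g hgR)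
      · have := Fin.le_def.mp (hle x (hLBV x hx)); omega
    have hBHF : ∀ x ∈ LB, ∀ u ∈ LB, ∀ y ∈ LB, τ.symm x < τ.symm u → τ.symm u < τ.symm y →
        min b (w : ℕ) < (x : ℕ) → x < y → y < u → False := by
      intro x hx u hu y hy h1 h2 h3 h4 h5
      rcases min_lt_iff.mp h3 with h | h
      · exact HFV x (hLBV x hx) u (hLBV u hu) y (hLBV y hy) h1 h2 h h4 h5
      · have := Fin.le_def.mp (hle x (hLBV x hx)); omega
    obtain ⟨ρB, hBbound, hBinj, hBext, hBavoid, hBghost, hBinv⟩ :=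
      ih LB (min b (w : ℕ)) (Y ∪ R) (by omega) hBdisj hBHB hBHC hBHD hBHF
    -- R recursive call
    have hRdisj : ∀ g ∈ Y, g ∉ R := fun g hg hgR => hdisj g hg (hRV g hgR)
    have hRHB : ∀ x ∈ R, ∀ z ∈ R, ∀ g ∈ Y, x < g → g < z → PQBase τ x z → False :=
      fun x hx z hz g hg h1 h2 h3 => HBV x (hRV x hx) z (hRV z hz) g hg h1 h2 h3
    have hRHC : ∀ z ∈ R, ∀ y ∈ R, PQBase τ z y → y < z → bR < (y : ℕ) → False := by
      intro z hz y hy hbase hyz hby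
      rcases hbRsplit _ hby with h | h | ⟨hL', h⟩
      · exact HCV z (hRV z hz) y (hRV y hy) hbase hyz h
      · have := Fin.le_def.mp (hle y (hRV y hy)); omega
      · set ℓ := L.min' hL' with hldef
        have hℓL : ℓ ∈ L := L.min'_mem hL'
        exact hτ ℓ w z y ((hLmem ℓ).mp hℓL).2 ((hRmem z).mp hz).2 hbase.1
          (finlt _ _ h) hyz (hRlt z hz)
    have hRHD : ∀ x ∈ R, ∀ z ∈ R, ∀ g ∈ Y, bR < (x : ℕ) → x < g → g < z → False := by
      intro x hx z hz g hg hbx hxg hgz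
      rcases hbRsplit _ hbx with h | h | ⟨hL', h⟩
      · exact HDV x (hRV x hx) z (hRV z hz) g hg h hxg hgz
      · have := Fin.le_def.mp (hle x (hRV x hx)); omega
      · set ℓ := L.min' hL' with hldef
        have hℓL : ℓ ∈ L := L.min'_mem hL'
        have hℓx : ℓ < x := finlt _ _ h
        have hℓz : ℓ < z := lt_trans hℓx (lt_trans hxg hgz)
        exact HBV ℓ (hLV ℓ hℓL) z (hRV z hz) g hg (lt_trans hℓx hxg) hgz
          ⟨lt_trans ((hLmem ℓ).mp hℓL).2 ((hRmem z).mp hz).2,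
            Or.inr ⟨w, ((hLmem ℓ).mp hℓL).2, ((hRmem z).mp hz).2, hℓz, hRlt z hz⟩⟩
    have hRHF : ∀ x ∈ R, ∀ u ∈ R, ∀ y ∈ R, τ.symm x < τ.symm u → τ.symm u < τ.symm y →
        bR < (x : ℕ) → x < y → y < u → False := by
      intro x hx u hu y hy h1 h2 h3 h4 h5
      rcases hbRsplit _ h3 with h | h | ⟨hL', h⟩
      · exact HFV x (hRV x hx) u (hRV u hu) y (hRV y hy) h1 h2 h h4 h5
      · have := Fin.le_def.mp (hle x (hRV x hx)); omega
      · set ℓ := L.min' hL' with hldef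
        have hℓL : ℓ ∈ L := L.min'_mem hL'
        exact hτ ℓ w u y ((hLmem ℓ).mp hℓL).2 ((hRmem u).mp hu).2 h2
          (lt_trans (finlt _ _ h) h4) h5 (hRlt u hu)
    obtain ⟨ρR, hRbound, hRinj, hRext, hRavoid, hRghost, hRinv⟩ :=
      ih R bR Y (by omega) hRdisj hRHB hRHC hRHD hRHF
    -- definition of the combined rank function
    have hwA : w ∉ LA := fun h => hwnL ((hLAmem w).mp h).1
    have hwB : w ∉ LB := fun h => hwnL ((hLBmem w).mp h).1
    have hRnA : ∀ v ∈ R, v ∉ LA := fun v hv h => hLR v ((hLAmem v).mp h).1 hv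
    have hRnB : ∀ v ∈ R, v ∉ LB := fun v hv h => hLR v ((hLBmem v).mp h).1 hv
    set ρ : Fin n → ℕ := fun v =>
      if v ∈ LA then ρA v else if v = w then LA.card
      else if v ∈ LB then LA.card + 1 + ρB v
      else if v ∈ R then LA.card + 1 + LB.card + ρR v else 0 with hρdef
    have hρA : ∀ v ∈ LA, ρ v = ρA v := by
      intro v hv; simp only [hρdef]; rw [if_pos hv]
    have hρw : ρ w = LA.card := by
      simp only [hρdef]; rw [if_neg hwA]; simp
    have hρB : ∀ v ∈ LB, ρ v = LA.card + 1 + ρB v := by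
      intro v hv
      have h1 : v ∉ LA := fun h => hAB v h hv
      have h2 : v ≠ w := fun h => hwB (h ▸ hv)
      simp only [hρdef]; rw [if_neg h1, if_neg h2, if_pos hv]
    have hρR : ∀ v ∈ R, ρ v = LA.card + 1 + LB.card + ρR v := by
      intro v hv
      have h1 : v ∉ LA := hRnA v hv
      have h3 : v ∉ LB := hRnB v hv
      have h2 : v ≠ w := fun h => hwnR (h ▸ hv)
      simp only [hρdef]; rw [if_neg h1, if_neg h2, if_neg h3, if_pos hv]
    refine ⟨ρ, ?_, ?_, ?_, ?_, ?_, ?_⟩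
    · -- bound
      intro x hx
      rcases hsplit x hx with h | rfl | h | h
      · have := hAbound x h; rw [hρA x h]; omega
      · rw [hρw]; omega
      · have := hBbound x h; rw [hρB x h]; omega
      · have := hRbound x h; rw [hρR x h]; omega
    · -- injectivity
      intro x hx y hy hne
      rcases hsplit x hx with hx' | rfl | hx' | hx' <;>
        rcases hsplit y hy with hy' | heq | hy' | hy'
      · rw [hρA x hx', hρA y hy']; exact hAinj x hx' y hy' hne
      · subst heq; rw [hρA x hx', hρw]; have := hAbound x hx'; omega
      · rw [hρA x hx', hρB y hy']; have := hAbound x hx'; omega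
      · rw [hρA x hx', hρR y hy']; have := hAbound x hx'; omega
      · rw [hρw, hρA y hy']; have := hAbound y hy'; omega
      · exact absurd heq.symm hne
      · rw [hρw, hρB y hy']; omega
      · rw [hρw, hρR y hy']; omega
      · rw [hρB x hx', hρA y hy']; have := hAbound y hy'; omega
      · subst heq; rw [hρB x hx', hρw]; omega
      · rw [hρB x hx', hρB y hy']
        have := hBinj x hx' y hy' hne; omega
      · rw [hρB x hx', hρR y hy']; have := hBbound x hx'; omega
      · rw [hρR x hx', hρA y hy']; have := hAbound y hy'; omega
      · subst heq; rw [hρR x hx', hρw]; omega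
      · rw [hρR x hx', hρB y hy']; have := hBbound y hy'; omega
      · rw [hρR x hx', hρR y hy']
        have := hRinj x hx' y hy' hne; omega
    · -- extension
      intro x hx y hy hbase
      rcases hsplit x hx with hx' | rfl | hx' | hx' <;>
        rcases hsplit y hy with hy' | heq | hy' | hy'
      · rw [hρA x hx', hρA y hy']; exact hAext x hx' y hy' hbase
      · subst heq; rw [hρA x hx', hρw]; exact hAbound x hx'
      · rw [hρA x hx', hρB y hy']; have := hAbound x hx'; omega
      · rw [hρA x hx', hρR y hy']; have := hAbound x hx'; omega
      · exact absurd hbase.1 (asymm ((hLmem y).mp ((hLAmem y).mp hy').1).2)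
      · subst heq; exact absurd hbase.1 (lt_irrefl _)
      · rw [hρw, hρB y hy']; omega
      · rw [hρw, hρR y hy']; omega
      · exact absurd hbase (fun hb => hnoBA x hx' y hy' hb)
      · subst heq
        exact absurd hx' (fun hxx => hAB x (hprecw x ((hLBmem x).mp hx').1 hbase) hxx)
      · rw [hρB x hx', hρB y hy']
        have := hBext x hx' y hy' hbase; omega
      · rw [hρB x hx', hρR y hy']; have := hBbound x hx'; omega
      · exact absurd hbase.1 (asymm (lt_trans ((hLmem y).mp ((hLAmem y).mp hy').1).2
          ((hRmem x).mp hx').2))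
      · subst heq; exact absurd hbase.1 (asymm ((hRmem x).mp hx').2)
      · exact absurd hbase.1 (asymm (lt_trans ((hLmem y).mp ((hLBmem y).mp hy').1).2
          ((hRmem x).mp hx').2))
      · rw [hρR x hx', hρR y hy']
        have := hRext x hx' y hy' hbase; omega
    · -- avoid 132
      intro x hx z hz y hy h1 h2 hxy hyz
      rcases hsplit x hx with hx' | rfl | hx' | hx'
      · -- x ∈ LA
        rcases hsplit y hy with hy' | heq | hy' | hy'
        · -- y ∈ LA, force z ∈ LA
          rcases hsplit z hz with hz' | heq' | hz' | hz'
          · rw [hρA x hx', hρA z hz'] at h1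
            rw [hρA z hz', hρA y hy'] at h2
            exact hAavoid x hx' z hz' y hy' h1 h2 hxy hyz
          · subst heq'; rw [hρw, hρA y hy'] at h2; have := hAbound y hy'; omega
          · rw [hρB z hz', hρA y hy'] at h2; have := hAbound y hy'; omega
          · rw [hρR z hz', hρA y hy'] at h2; have := hAbound y hy'; omega
        · -- y = w
          subst heq
          exact absurd (hle z hz) (not_le.mpr hyz)
        · -- y ∈ LB
          obtain ⟨s, hsSB, hys⟩ := hLBex y hy'
          exact lt_asymm hxy (lt_of_le_of_lt hys (((hLAmem x).mp hx').2 s hsSB))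
        · -- y ∈ R: x is blocked
          have hxSB : x ∈ SB := (hSBmem x).mpr
            ⟨((hLAmem x).mp hx').1, Or.inl ⟨y, hy', hxy⟩⟩
          exact hAB x hx' (hSBLB x hxSB)
      · -- x = w
        exact absurd (hle y hy) (not_le.mpr hxy)
      · -- x ∈ LB
        rcases hsplit y hy with hy' | heq | hy' | hy'
        · rw [hρA y hy'] at h2
          rcases hsplit z hz with hz' | heq' | hz' | hz'
          · rw [hρA z hz'] at h2
            rw [hρB x hx', hρA z hz'] at h1; have := hAbound z hz'; omega
          · subst heq'; rw [hρB x hx', hρw] at h1; omega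
          · rw [hρB x hx', hρB z hz'] at h1
            rw [hρB z hz'] at h2; have := hAbound y hy'; omega
          · rw [hρB x hx', hρR z hz'] at h1
            rw [hρR z hz'] at h2; have := hAbound y hy'; omega
        · subst heq
          exact absurd (hle z hz) (not_le.mpr hyz)
        · -- y ∈ LB
          rcases hsplit z hz with hz' | heq' | hz' | hz'
          · rw [hρB x hx', hρA z hz'] at h1; have := hAbound z hz'; omega
          · subst heq'; rw [hρB x hx', hρw] at h1; omega
          · rw [hρB x hx', hρB z hz'] at h1
            rw [hρB z hz', hρB y hy'] at h2
            exact hBavoid x hx' z hz' y hy' (by omega) (by omega) hxy hyz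
          · rw [hρR z hz', hρB y hy'] at h2; have := hBbound y hy'; omega
        · -- y ∈ R
          rcases hsplit z hz with hz' | heq' | hz' | hz'
          · rw [hρB x hx', hρA z hz'] at h1; have := hAbound z hz'; omega
          · subst heq'; rw [hρB x hx', hρw] at h1; omega
          · -- z ∈ LB : ghost via R for the B-call
            rw [hρB x hx', hρB z hz'] at h1
            exact hBghost x hx' z hz' y (Finset.mem_union.mpr (Or.inr hy'))
              (by omega) hxy hyz
          · -- z ∈ R : inversion in R-part
            rw [hρR z hz', hρR y hy'] at h2
            have hybR : (y : ℕ) ≤ bR := hRinv z hz' y hy' (by omega) hyz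
            have hbx : bR ≤ (x : ℕ) := hbRL x ((hLBmem x).mp hx').1
            have : (x : ℕ) < (y : ℕ) := hxy
            omega
      · -- x ∈ R : everything in R
        rcases hsplit y hy with hy' | heq | hy' | hy'
        · have e1 := hρR x hx'
          have e2 := hρA y hy'
          have := hAbound y hy'
          omega
        · subst heq
          exact absurd (hle z hz) (not_le.mpr hyz)
        · have e1 := hρR x hx'
          have e2 := hρB y hy'
          have := hBbound y hy'
          omega
        · rcases hsplit z hz with hz' | heq' | hz' | hz'
          · rw [hρR x hx', hρA z hz'] at h1; have := hAbound z hz'; omega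
          · subst heq'; rw [hρR x hx', hρw] at h1; omega
          · rw [hρR x hx', hρB z hz'] at h1; have := hBbound z hz'; omega
          · rw [hρR x hx', hρR z hz'] at h1
            rw [hρR z hz', hρR y hy'] at h2
            exact hRavoid x hx' z hz' y hy' (by omega) (by omega) hxy hyz
    · -- ghost condition
      intro x hx z hz g hg h1 hxg hgz
      rcases hsplit x hx with hx' | rfl | hx' | hx'
      · rcases hsplit z hz with hz' | heq' | hz' | hz'
        · rw [hρA x hx', hρA z hz'] at h1
          exact hAghost x hx' z hz' g
            (Finset.mem_union.mpr (Or.inl (Finset.mem_union.mpr (Or.inl hg)))) h1 hxg hgz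
        · subst heq'
          have hxSB : x ∈ SB := (hSBmem x).mpr
            ⟨((hLAmem x).mp hx').1, Or.inr ⟨g, hg, hxg, hgz⟩⟩
          exact hAB x hx' (hSBLB x hxSB)
        · obtain ⟨s, hsSB, hzs⟩ := hLBex z hz'
          exact lt_asymm (lt_trans hxg hgz)
            (lt_of_le_of_lt hzs (((hLAmem x).mp hx').2 s hsSB))
        · -- z ∈ R : PQBase x z via witness w, contradict HBV
          have hxL : x ∈ L := ((hLAmem x).mp hx').1
          exact HBV x (hLV x hxL) z (hRV z hz') g hg hxg hgz
            ⟨lt_trans ((hLmem x).mp hxL).2 ((hRmem z).mp hz').2,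
              Or.inr ⟨w, ((hLmem x).mp hxL).2, ((hRmem z).mp hz').2,
                lt_trans hxg hgz, hRlt z hz'⟩⟩
      · exact absurd (hle z hz) (not_le.mpr (lt_trans hxg hgz))
      · rcases hsplit z hz with hz' | heq' | hz' | hz'
        · rw [hρB x hx', hρA z hz'] at h1; have := hAbound z hz'; omega
        · subst heq'; rw [hρB x hx', hρw] at h1; omega
        · rw [hρB x hx', hρB z hz'] at h1
          exact hBghost x hx' z hz' g (Finset.mem_union.mpr (Or.inl hg))
            (by omega) hxg hgz
        · have hxL : x ∈ L := ((hLBmem x).mp hx').1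
          exact HBV x (hLV x hxL) z (hRV z hz') g hg hxg hgz
            ⟨lt_trans ((hLmem x).mp hxL).2 ((hRmem z).mp hz').2,
              Or.inr ⟨w, ((hLmem x).mp hxL).2, ((hRmem z).mp hz').2,
                lt_trans hxg hgz, hRlt z hz'⟩⟩
      · rcases hsplit z hz with hz' | heq' | hz' | hz'
        · rw [hρR x hx', hρA z hz'] at h1; have := hAbound z hz'; omega
        · subst heq'; rw [hρR x hx', hρw] at h1; omega
        · rw [hρR x hx', hρB z hz'] at h1; have := hBbound z hz'; omega
        · rw [hρR x hx', hρR z hz'] at h1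
          exact hRghost x hx' z hz' g hg (by omega) hxg hgz
    · -- inversions have small bottom
      intro z hz y hy h1 hyz
      rcases hsplit y hy with hy' | heq | hy' | hy'
      · -- y ∈ LA : z must be in LA
        rcases hsplit z hz with hz' | heq' | hz' | hz'
        · rw [hρA z hz', hρA y hy'] at h1
          exact hAinv z hz' y hy' h1 hyz
        · subst heq'
          have e := hρA y hy'
          have := hAbound y hy'
          rw [hρw] at h1
          omega
        · rw [hρB z hz', hρA y hy'] at h1; have := hAbound y hy'; omega
        · rw [hρR z hz', hρA y hy'] at h1; have := hAbound y hy'; omega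
      · -- y = w : impossible since y < z ≤ w
        subst heq
        exact absurd (hle z hz) (not_le.mpr hyz)
      · -- y ∈ LB : y ≤ some s ∈ SB ≤ b
        obtain ⟨s, hsSB, hys⟩ := hLBex y hy'
        have h2 := hSBb s hsSB
        have h3 : (y : ℕ) ≤ (s : ℕ) := Fin.le_def.mp hys
        omega
      · -- y ∈ R
        rcases hsplit z hz with hz' | heq' | hz' | hz'
        · by_contra hc
          exact HCV z (hLAV z hz') y (hRV y hy')
            ⟨lt_trans ((hLmem z).mp ((hLAmem z).mp hz').1).2 ((hRmem y).mp hy').2,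
              Or.inl hyz⟩ hyz (by omega)
        · subst heq'
          by_contra hc
          exact HCV w hwV y (hRV y hy') ⟨((hRmem y).mp hy').2, Or.inl hyz⟩ hyz (by omega)
        · by_contra hc
          exact HCV z (hLBV z hz') y (hRV y hy')
            ⟨lt_trans ((hLmem z).mp ((hLBmem z).mp hz').1).2 ((hRmem y).mp hy').2,
              Or.inl hyz⟩ hyz (by omega)
        · rw [hρR z hz', hρR y hy'] at h1
          have := hRinv z hz' y hy' (by omega) hyz
          omega
end Main


section Final
variable {n : ℕ} (τ : Equiv.Perm (Fin n))

lemma exists_good_input (hτ : ¬ Contains p1432 τ) :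
    ∃ σ : Equiv.Perm (Fin n), (¬ Contains p132 σ) ∧ Allowable σ τ := by
  have hτ4 := noPat_of_not_contains τ hτ
  obtain ⟨ρ, hbound, hinj, hext, havoid, hghost, hinv⟩ :=
    main_exists τ hτ4 n Finset.univ n ∅ (by simp) (by simp) (by simp)
      (fun z _ y _ _ _ h => absurd h (by have := y.isLt; omega))
      (by simp)
      (fun x _ u _ y _ _ _ h => absurd h (by have := x.isLt; omega))
  have hinj' : Function.Injective ρ := by
    intro a c h
    by_contra hne
    exact hinj a (Finset.mem_univ a) c (Finset.mem_univ c) hne h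
  set σ := Tuple.sort ρ with hσdef
  have hsm : StrictMono (ρ ∘ σ) :=
    (Tuple.monotone_sort ρ).strictMono_of_injective (hinj'.comp σ.injective)
  have key : ∀ x y : Fin n, ρ x < ρ y → σ.symm x < σ.symm y := by
    intro x y h
    have hx : (ρ ∘ σ) (σ.symm x) = ρ x := by simp
    have hy : (ρ ∘ σ) (σ.symm y) = ρ y := by simp
    rw [← hsm.lt_iff_lt, hx, hy]
    exact h
  refine ⟨σ, ?_, ?_⟩
  · rintro ⟨f, hf⟩
    have hp1 : p132 0 < p132 2 := by decide
    have hp2 : p132 2 < p132 1 := by decide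
    have hxy : σ (f 0) < σ (f 2) := (hf 0 2).mp hp1
    have hyz : σ (f 2) < σ (f 1) := (hf 2 1).mp hp2
    have hr1 : ρ (σ (f 0)) < ρ (σ (f 1)) := hsm (f.strictMono (by decide))
    have hr2 : ρ (σ (f 1)) < ρ (σ (f 2)) := hsm (f.strictMono (by decide))
    exact havoid (σ (f 0)) (Finset.mem_univ _) (σ (f 1)) (Finset.mem_univ _)
      (σ (f 2)) (Finset.mem_univ _) hr1 hr2 hxy hyz
  · intro x y hpq
    exact key x y (hext x (Finset.mem_univ _) y (Finset.mem_univ _) ((pq_iff τ).mp hpq))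

lemma forward_dir (σ : Equiv.Perm (Fin n)) (hallow : Allowable σ τ)
    (h1432 : Contains p1432 τ) : Contains p132 σ := by
  obtain ⟨f, hf⟩ := h1432
  have hab : τ (f 0) < τ (f 3) := (hf 0 3).mp (by decide)
  have hbc : τ (f 3) < τ (f 2) := (hf 3 2).mp (by decide)
  have hcd : τ (f 2) < τ (f 1) := (hf 2 1).mp (by decide)
  set a := τ (f 0) with ha
  set d := τ (f 1) with hd
  set c := τ (f 2) with hc
  set b := τ (f 3) with hb
  have hpa : τ.symm a = f 0 := by rw [ha]; simp
  have hpd : τ.symm d = f 1 := by rw [hd]; simp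
  have hpc : τ.symm c = f 2 := by rw [hc]; simp
  have hpb : τ.symm b = f 3 := by rw [hb]; simp
  have base2 : PQBase τ a c := by
    refine ⟨?_, Or.inr ⟨d, ?_, ?_, lt_trans hab hbc, hcd⟩⟩
    · rw [hpa, hpc]; exact f.strictMono (by decide)
    · rw [hpa, hpd]; exact f.strictMono (by decide)
    · rw [hpd, hpc]; exact f.strictMono (by decide)
  have base3 : PQBase τ c b := by
    refine ⟨?_, Or.inl hbc⟩
    rw [hpc, hpb]; exact f.strictMono (by decide)
  have i1 : σ.symm a < σ.symm c := hallow a c (Relation.TransGen.single base2)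
  have i2 : σ.symm c < σ.symm b := hallow c b (Relation.TransGen.single base3)
  have hsm : StrictMono (![σ.symm a, σ.symm c, σ.symm b]) := by
    intro i j hij
    fin_cases i <;> fin_cases j <;> simp_all <;>
      first
        | exact i1.trans i2
        | omega
  refine ⟨OrderEmbedding.ofStrictMono _ hsm, ?_⟩
  intro i j
  have e1 : ∀ m : Fin 3, σ ((OrderEmbedding.ofStrictMono _ hsm) m)
      = ![a, c, b] m := by
    intro m
    fin_cases m <;> simp [OrderEmbedding.ofStrictMono]
  rw [e1, e1]
  have h1 : a < b := hab
  have h2 : b < c := hbc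
  have h3 : a < c := lt_trans h1 h2
  fin_cases i <;> fin_cases j <;>
    simp [p132, Equiv.ofBijective] <;>
    first
      | exact h1 | exact h2 | exact h3
      | exact h1.le | exact h2.le | exact h3.le | exact le_refl _
      | exact asymm h1 | exact asymm h2 | exact asymm h3
end Final

/-- `Av(132)𝒜 = Av(1432)`. -/
theorem imageA_av132 :
    ImageA (Av {(⟨3, p132⟩ : PermSig)}) = Av {(⟨4, p1432⟩ : PermSig)} := by
  ext τS
  obtain ⟨m, τ⟩ := τS
  constructor
  · rintro ⟨σ, hσC, hallow⟩
    intro β hβ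
    rw [Set.mem_singleton_iff] at hβ
    subst hβ
    intro hcont
    exact hσC ⟨3, p132⟩ rfl (forward_dir τ σ hallow hcont)
  · intro hAv
    obtain ⟨σ, h132, hallow⟩ := exists_good_input τ (hAv ⟨4, p1432⟩ rfl)
    refine ⟨σ, ?_, hallow⟩
    intro β hβ
    rw [Set.mem_singleton_iff] at hβ
    subst hβ
    exact h132
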